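/- Let 0 < α < n and Ω ∈ L^∞(S^{n-1}) homogeneous of degree zero. Then for any cube Q₁ with side length ρ, any h ∈ ℝⁿ with |h| ≥ 4√n, any x ∈ Q₁ + ρh, and the function φ with |φ| ≤ 2χ_{Q₁} and ∫φ = 0, one has |∫_{Q₁} Ω(x-y)|x-y|^{α-n} φ(y) dy| ≤ C ρ^α |h|^{α-n} ( |h|^{-1} + ρ^{-n} ∫_{Q₁} |Ω(x-y) - Ω(x - ρ y₀)| dy ), where ρy₀ is the center of Q₁ and C depends only on n, α, ‖Ω‖_∞. -/

import Mathlib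

open MeasureTheory

/-!
Since `∫ φ = 0`, the kernel `K y = Ω (x - y) ‖x - y‖ ^ β` (`β = α - n`) may be replaced by
`K y - K c₀`. Every `y ∈ Q₁` lies at distance at least `m = (3/4) ρ ‖h‖` from `x`, and
`K y - K c₀ = Ω (x - y) (‖x - y‖ ^ β - ‖x - c₀‖ ^ β) + (Ω (x - y) - Ω (x - c₀)) ‖x - c₀‖ ^ β`:
by the mean value theorem the first term is at most `M |β| m ^ (β - 1) √n ρ / 2`, the second at
most `m ^ β |Ω (x - y) - Ω (x - c₀)|`. Integrating over `Q₁`, of volume `ρ ^ n`, and scaling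
`ρ ‖h‖` out of the powers of `m` gives the estimate.
-/

def cubeC (n : ℕ) (a : EuclideanSpace ℝ (Fin n)) (r : ℝ) : Set (EuclideanSpace ℝ (Fin n)) :=
  {x | ∀ i, |x i - a i| ≤ r / 2}

section Cube

variable {n : ℕ}

lemma cubeC_eq_preimage (a : EuclideanSpace ℝ (Fin n)) (r : ℝ) :
    cubeC n a r = (MeasurableEquiv.toLp 2 (Fin n → ℝ)).symm ⁻¹'
      Set.univ.pi fun i => Set.Icc (a i - r / 2) (a i + r / 2) := by
  ext x
  simp only [cubeC, Set.mem_ofPred_eq, Set.mem_preimage, Set.mem_univ_pi, Set.mem_Icc, abs_le]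
  refine forall_congr' fun i => ?_
  change _ ↔ _ ≤ x i ∧ x i ≤ _
  constructor <;> rintro ⟨h₁, h₂⟩ <;> constructor <;> linarith

lemma measurableSet_cubeC (a : EuclideanSpace ℝ (Fin n)) (r : ℝ) :
    MeasurableSet (cubeC n a r) := by
  rw [cubeC_eq_preimage]
  exact (MeasurableEquiv.toLp 2 (Fin n → ℝ)).symm.measurable
    (MeasurableSet.univ_pi fun _ => measurableSet_Icc)

lemma volume_cubeC (a : EuclideanSpace ℝ (Fin n)) (r : ℝ) :
    volume (cubeC n a r) = ENNReal.ofReal r ^ n := by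
  rw [cubeC_eq_preimage,
    (EuclideanSpace.volume_preserving_symm_measurableEquiv_toLp (Fin n)).measure_preimage
      (MeasurableSet.univ_pi fun _ => measurableSet_Icc).nullMeasurableSet,
    volume_pi_pi]
  simp [Real.volume_Icc]

lemma volume_real_cubeC (a : EuclideanSpace ℝ (Fin n)) {r : ℝ} (hr : 0 ≤ r) :
    volume.real (cubeC n a r) = r ^ n := by
  rw [measureReal_def, volume_cubeC, ENNReal.toReal_pow, ENNReal.toReal_ofReal hr]

lemma mem_cubeC_self (a : EuclideanSpace ℝ (Fin n)) {r : ℝ} (hr : 0 ≤ r) : a ∈ cubeC n a r :=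
  fun i => by simpa using div_nonneg hr zero_le_two

lemma norm_sub_le_of_mem_cubeC {a x : EuclideanSpace ℝ (Fin n)} {r : ℝ} (hr : 0 ≤ r)
    (hx : x ∈ cubeC n a r) : ‖x - a‖ ≤ √n * r / 2 := by
  rw [EuclideanSpace.norm_eq]
  calc √(∑ i, ‖(x - a) i‖ ^ 2) ≤ √(∑ _i : Fin n, (r / 2) ^ 2) := by
        gcongr with i
        simpa using hx i
    _ = √n * r / 2 := by
        rw [Finset.sum_const, Finset.card_univ, Fintype.card_fin, nsmul_eq_mul,
          Real.sqrt_mul n.cast_nonneg, Real.sqrt_sq (by positivity), mul_div_assoc]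

lemma norm_sub_le_norm_sub_add_of_mem_cubeC {a b x y : EuclideanSpace ℝ (Fin n)} {r : ℝ}
    (hr : 0 ≤ r) (hx : x ∈ cubeC n b r) (hy : y ∈ cubeC n a r) :
    ‖b - a‖ ≤ ‖x - y‖ + √n * r := by
  have hxb := norm_sub_le_of_mem_cubeC hr hx
  have hya := norm_sub_le_of_mem_cubeC hr hy
  calc ‖b - a‖ = ‖(x - y) - (x - b) + (y - a)‖ := by congr 1; abel
    _ ≤ ‖x - y‖ + ‖x - b‖ + ‖y - a‖ := (norm_add_le _ _).trans (by gcongr; exact norm_sub_le _ _)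
    _ ≤ ‖x - y‖ + √n * r := by linarith

end Cube

lemma abs_rpow_sub_rpow_le {β m a b : ℝ} (hβ : β ≤ 1) (hm : 0 < m) (ha : m ≤ a) (hb : m ≤ b) :
    |a ^ β - b ^ β| ≤ |β| * m ^ (β - 1) * |a - b| := by
  have hderiv : ∀ t ∈ Set.Ici m,
      HasDerivWithinAt (fun s : ℝ => s ^ β) (β * t ^ (β - 1)) (Set.Ici m) t := fun t ht =>
    (Real.hasDerivAt_rpow_const (Or.inl (hm.trans_le ht).ne')).hasDerivWithinAt
  have hbound : ∀ t ∈ Set.Ici m, ‖β * t ^ (β - 1)‖ ≤ |β| * m ^ (β - 1) := fun t ht => by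
    rw [norm_mul, Real.norm_eq_abs, Real.norm_of_nonneg (Real.rpow_nonneg (hm.le.trans ht) _)]
    exact mul_le_mul_of_nonneg_left
      (Real.rpow_le_rpow_of_nonpos hm ht (by linarith)) (abs_nonneg β)
  simpa [Real.norm_eq_abs, abs_sub_comm] using
    (convex_Ici m).norm_image_sub_le_of_norm_hasDerivWithin_le hderiv hbound hb ha

lemma abs_mul_rpow_sub_mul_rpow_le {a a₀ r r₀ m M β : ℝ} (hβ : β ≤ 0) (hm : 0 < m)
    (hr : m ≤ r) (hr₀ : m ≤ r₀) (ha : |a| ≤ M) :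
    |a * r ^ β - a₀ * r₀ ^ β| ≤ M * |β| * m ^ (β - 1) * |r - r₀| + m ^ β * |a - a₀| := by
  have hpow := abs_rpow_sub_rpow_le (β := β) (by linarith) hm hr hr₀
  have hr₀β : r₀ ^ β ≤ m ^ β := Real.rpow_le_rpow_of_nonpos hm hr₀ hβ
  have hr₀β₀ : 0 ≤ r₀ ^ β := Real.rpow_nonneg (hm.le.trans hr₀) β
  have hM : 0 ≤ M := (abs_nonneg a).trans ha
  calc |a * r ^ β - a₀ * r₀ ^ β| = |a * (r ^ β - r₀ ^ β) + (a - a₀) * r₀ ^ β| := by ring_nf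
    _ ≤ |a| * |r ^ β - r₀ ^ β| + |a - a₀| * r₀ ^ β := by
        rw [← abs_mul, ← abs_of_nonneg hr₀β₀, ← abs_mul, abs_of_nonneg hr₀β₀]
        exact abs_add_le _ _
    _ ≤ M * (|β| * m ^ (β - 1) * |r - r₀|) + |a - a₀| * m ^ β := by gcongr
    _ = M * |β| * m ^ (β - 1) * |r - r₀| + m ^ β * |a - a₀| := by ring

lemma abs_setIntegral_mul_le_of_setIntegral_eq_zero {X : Type*} [MeasurableSpace X]
    {μ : Measure X} {Q : Set X} (hQ : MeasurableSet Q) (hμQ : μ Q ≠ ⊤) {K φ g : X → ℝ}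
    {k₀ A B b : ℝ} (hK : AEStronglyMeasurable K (μ.restrict Q))
    (hφ : AEStronglyMeasurable φ (μ.restrict Q)) (hg : IntegrableOn g Q μ)
    (hφb : ∀ y ∈ Q, |φ y| ≤ b) (hφ0 : ∫ y in Q, φ y ∂μ = 0)
    (hKb : ∀ y ∈ Q, |K y - k₀| ≤ A + B * g y) :
    |∫ y in Q, K y * φ y ∂μ| ≤ b * (A * μ.real Q + B * ∫ y in Q, g y ∂μ) := by
  have hmajorant : IntegrableOn (fun y => b * (A + B * g y)) Q μ :=
    ((integrableOn_const (C := A) hμQ).add (hg.const_mul B)).const_mul b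
  have hpointwise : ∀ y ∈ Q, |(K y - k₀) * φ y| ≤ b * (A + B * g y) := fun y hy => by
    rw [abs_mul, mul_comm b]
    exact mul_le_mul (hKb y hy) (hφb y hy) (abs_nonneg _) ((abs_nonneg _).trans (hKb y hy))
  have hφint : IntegrableOn φ Q μ :=
    .of_bound hμQ.lt_top hφ b (ae_restrict_of_forall_mem hQ hφb)
  have hdiff : IntegrableOn (fun y => (K y - k₀) * φ y) Q μ :=
    hmajorant.mono' ((hK.sub aestronglyMeasurable_const).mul hφ)
      (ae_restrict_of_forall_mem hQ hpointwise)
  have hcancel : ∫ y in Q, K y * φ y ∂μ = ∫ y in Q, (K y - k₀) * φ y ∂μ := by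
    have hsplit : ∀ y, K y * φ y = (K y - k₀) * φ y + k₀ * φ y := fun y => by ring
    simp_rw [hsplit]
    rw [integral_add hdiff (hφint.const_mul k₀), integral_const_mul, hφ0, mul_zero, add_zero]
  calc |∫ y in Q, K y * φ y ∂μ| = |∫ y in Q, (K y - k₀) * φ y ∂μ| := by rw [hcancel]
    _ ≤ ∫ y in Q, b * (A + B * g y) ∂μ :=
        norm_integral_le_of_norm_le (f := fun y => (K y - k₀) * φ y) hmajorant
          (ae_restrict_of_forall_mem hQ hpointwise)
    _ = b * (A * μ.real Q + B * ∫ y in Q, g y ∂μ) := by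
        rw [integral_const_mul, integral_add (integrableOn_const (C := A) hμQ) (hg.const_mul B),
          setIntegral_const, integral_const_mul, smul_eq_mul, mul_comm (μ.real Q)]

lemma abs_setIntegral_kernel_mul_le {n : ℕ} (hn : 0 < n) {α M ρ : ℝ} (hαn : α < n)
    {Ω φ : EuclideanSpace ℝ (Fin n) → ℝ} (hΩ : Measurable Ω) (hΩM : ∀ z, z ≠ 0 → |Ω z| ≤ M)
    (hφ : Measurable φ) {c₀ h x : EuclideanSpace ℝ (Fin n)} (hρ : 0 < ρ) (hh : 4 * √n ≤ ‖h‖)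
    (hφ2 : ∀ y ∈ cubeC n c₀ ρ, |φ y| ≤ 2) (hφ0 : ∫ y in cubeC n c₀ ρ, φ y = 0)
    (hx : x ∈ cubeC n (c₀ + ρ • h) ρ) :
    |∫ y in cubeC n c₀ ρ, Ω (x - y) * ‖x - y‖ ^ (α - n) * φ y| ≤
      2 * (M * |α - n| * (3 / 4 * (ρ * ‖h‖)) ^ (α - n - 1) * (√n * ρ / 2) * ρ ^ n +
        (3 / 4 * (ρ * ‖h‖)) ^ (α - n) * ∫ y in cubeC n c₀ ρ, |Ω (x - y) - Ω (x - c₀)|) := by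
  set Q := cubeC n c₀ ρ
  set m := 3 / 4 * (ρ * ‖h‖)
  have hm : 0 < m := by
    have : 0 < ‖h‖ := lt_of_lt_of_le (by positivity) hh
    positivity
  have hfar : ∀ y ∈ Q, m ≤ ‖x - y‖ := fun y hy => by
    have hsep := norm_sub_le_norm_sub_add_of_mem_cubeC hρ.le hx hy
    rw [add_sub_cancel_left, norm_smul, Real.norm_of_nonneg hρ.le] at hsep
    have := mul_le_mul_of_nonneg_left hh hρ.le
    show 3 / 4 * (ρ * ‖h‖) ≤ ‖x - y‖
    linarith
  have hc₀ : c₀ ∈ Q := mem_cubeC_self c₀ hρ.le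
  have hne : ∀ y ∈ Q, x - y ≠ 0 := fun y hy => norm_pos_iff.1 (hm.trans_le (hfar y hy))
  have hM : 0 ≤ M := (abs_nonneg _).trans (hΩM _ (hne c₀ hc₀))
  have hQ : volume Q ≠ ⊤ := by
    rw [volume_cubeC]
    exact ENNReal.pow_ne_top ENNReal.ofReal_ne_top
  have hΔ : IntegrableOn (fun y => |Ω (x - y) - Ω (x - c₀)|) Q :=
    .of_bound hQ.lt_top (by fun_prop : Measurable _).aestronglyMeasurable (2 * M)
      (ae_restrict_of_forall_mem (measurableSet_cubeC _ _) fun y hy => by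
        rw [Real.norm_eq_abs, abs_abs]
        linarith [abs_sub (Ω (x - y)) (Ω (x - c₀)), hΩM _ (hne y hy), hΩM _ (hne c₀ hc₀)])
  rw [← volume_real_cubeC c₀ hρ.le]
  refine abs_setIntegral_mul_le_of_setIntegral_eq_zero (measurableSet_cubeC c₀ ρ) hQ
    (K := fun y => Ω (x - y) * ‖x - y‖ ^ (α - n)) (k₀ := Ω (x - c₀) * ‖x - c₀‖ ^ (α - n))
    (by fun_prop : Measurable _).aestronglyMeasurable
    hφ.aestronglyMeasurable hΔ hφ2 hφ0 fun y hy => ?_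
  calc _ ≤ M * |α - n| * m ^ (α - n - 1) * |‖x - y‖ - ‖x - c₀‖| +
        m ^ (α - n) * |Ω (x - y) - Ω (x - c₀)| :=
        abs_mul_rpow_sub_mul_rpow_le (by linarith) hm (hfar y hy) (hfar c₀ hc₀) (hΩM _ (hne y hy))
    _ ≤ _ := by
        gcongr
        calc |‖x - y‖ - ‖x - c₀‖| ≤ ‖(x - y) - (x - c₀)‖ := abs_norm_sub_norm_le _ _
          _ = ‖y - c₀‖ := by rw [sub_sub_sub_cancel_left, norm_sub_rev]
          _ ≤ √n * ρ / 2 := norm_sub_le_of_mem_cubeC hρ.le hy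

lemma kernel_bound_eq_rescaled {ρ t : ℝ} (hρ : 0 < ρ) (ht : 0 < t) (n : ℕ) (α M I : ℝ) :
    2 * (M * |α - n| * (3 / 4 * (ρ * t)) ^ (α - n - 1) * (√n * ρ / 2) * ρ ^ n +
        (3 / 4 * (ρ * t)) ^ (α - n) * I) =
      M * |α - n| * √n * (3 / 4 : ℝ) ^ (α - n - 1) * (ρ ^ α * t ^ (α - n)) * t⁻¹ +
        2 * (3 / 4 : ℝ) ^ (α - n) * (ρ ^ α * t ^ (α - n)) * (ρ ^ (-(n : ℝ)) * I) := by
  have hmul : ∀ γ : ℝ, (3 / 4 * (ρ * t)) ^ γ = (3 / 4) ^ γ * ρ ^ γ * t ^ γ := fun γ => by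
    rw [Real.mul_rpow (by norm_num) (by positivity), Real.mul_rpow hρ.le ht.le, mul_assoc]
  have hρα : ρ ^ (α - n - 1) * ρ * ρ ^ n = ρ ^ α := by
    rw [← Real.rpow_natCast, ← Real.rpow_add_one hρ.ne', ← Real.rpow_add hρ]
    ring_nf
  have hρβ : ρ ^ (α - n) = ρ ^ α * ρ ^ (-(n : ℝ)) := by
    rw [← Real.rpow_add hρ]
    ring_nf
  have htβ : t ^ (α - n - 1) = t ^ (α - n) * t⁻¹ := by
    rw [Real.rpow_sub_one ht.ne', div_eq_mul_inv]
  rw [hmul, hmul, htβ, hρβ]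
  linear_combination (M * |α - n| * √n * (3 / 4 : ℝ) ^ (α - n - 1) * t ^ (α - n) * t⁻¹) * hρα

theorem stmt_17_general {n : ℕ} (hn : 0 < n) (α M : ℝ)
    (hαn : α < n) (hM : 0 ≤ M) :
    ∃ C : ℝ, 0 < C ∧
      ∀ (Ω : EuclideanSpace ℝ (Fin n) → ℝ), Measurable Ω →
        (∀ t : ℝ, 0 < t → ∀ x : EuclideanSpace ℝ (Fin n), x ≠ 0 → Ω (t • x) = Ω x) →
        (∀ x : EuclideanSpace ℝ (Fin n), x ≠ 0 → |Ω x| ≤ M) →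
        ∀ (c₀ h : EuclideanSpace ℝ (Fin n)) (ρ : ℝ) (φ : EuclideanSpace ℝ (Fin n) → ℝ),
          0 < ρ → 4 * Real.sqrt n ≤ ‖h‖ →
          Measurable φ →
          (∀ x, |φ x| ≤ 2 * Set.indicator (cubeC n c₀ ρ) (fun _ => (1 : ℝ)) x) →
          (∫ x, φ x) = 0 →
          ∀ x ∈ cubeC n (c₀ + ρ • h) ρ,
            |∫ y in cubeC n c₀ ρ, Ω (x - y) * ‖x - y‖ ^ (α - (n : ℝ)) * φ y| ≤
              C * ρ ^ α * ‖h‖ ^ (α - (n : ℝ)) *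
                (‖h‖⁻¹ + ρ ^ (-(n : ℝ)) *
                  ∫ y in cubeC n c₀ ρ, |Ω (x - y) - Ω (x - c₀)|) := by
  set C₁ := M * |α - n| * √n * (3 / 4 : ℝ) ^ (α - n - 1)
  set C₂ := 2 * (3 / 4 : ℝ) ^ (α - n)
  have hC₁ : 0 ≤ C₁ := by positivity
  refine ⟨C₁ + C₂, by positivity, ?_⟩
  intro Ω hΩ _ hΩM c₀ h ρ φ hρ hh hφ hφQ hφ0 x hx
  have hφ2 : ∀ y ∈ cubeC n c₀ ρ, |φ y| ≤ 2 := fun y hy => by simpa [hy] using hφQ y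
  have hφQ0 : ∫ y in cubeC n c₀ ρ, φ y = 0 := by
    rwa [setIntegral_eq_integral_of_forall_compl_eq_zero fun y hy => by simpa [hy] using hφQ y]
  set I := ∫ y in cubeC n c₀ ρ, |Ω (x - y) - Ω (x - c₀)|
  have hI : 0 ≤ I := setIntegral_nonneg (measurableSet_cubeC _ _) fun _ _ => abs_nonneg _
  have ht : 0 < ‖h‖ := lt_of_lt_of_le (by positivity) hh
  set X := ρ ^ α * ‖h‖ ^ (α - n)
  calc _ ≤ _ := abs_setIntegral_kernel_mul_le hn hαn hΩ hΩM hφ hρ hh hφ2 hφQ0 hx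
    _ = C₁ * X * ‖h‖⁻¹ + C₂ * X * (ρ ^ (-(n : ℝ)) * I) := kernel_bound_eq_rescaled hρ ht n α M I
    _ ≤ C₁ * X * (‖h‖⁻¹ + ρ ^ (-(n : ℝ)) * I) + C₂ * X * (‖h‖⁻¹ + ρ ^ (-(n : ℝ)) * I) := by
        gcongr
        · exact le_add_of_nonneg_right (by positivity)
        · exact le_add_of_nonneg_left (by positivity)
    _ = _ := by ring

/-- Let `0 < α < n`, `Ω ∈ L^∞(S^{n-1})` homogeneous of degree zero.  For any cube `Q₁`
of side `ρ` and center `ρy₀`, any `h` with `|h| ≥ 4√n`, any `x ∈ Q₁ + ρh`, and any `φ`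
with `|φ| ≤ 2χ_{Q₁}` and `∫ φ = 0`:
`|∫_{Q₁} Ω(x-y)|x-y|^{α-n} φ(y) dy| ≤ C ρ^α |h|^{α-n} (|h|⁻¹ + ρ^{-n} ∫_{Q₁} |Ω(x-y) - Ω(x-ρy₀)| dy)`,
with `C` depending only on `n, α, ‖Ω‖_∞`. -/
theorem stmt_17 {n : ℕ} (hn : 0 < n) (α M : ℝ)
    (hα0 : 0 < α) (hαn : α < n) (hM : 0 ≤ M) :
    ∃ C : ℝ, 0 < C ∧
      ∀ (Ω : EuclideanSpace ℝ (Fin n) → ℝ), Measurable Ω →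
        (∀ t : ℝ, 0 < t → ∀ x : EuclideanSpace ℝ (Fin n), x ≠ 0 → Ω (t • x) = Ω x) →
        (∀ x : EuclideanSpace ℝ (Fin n), x ≠ 0 → |Ω x| ≤ M) →
        ∀ (c₀ h : EuclideanSpace ℝ (Fin n)) (ρ : ℝ) (φ : EuclideanSpace ℝ (Fin n) → ℝ),
          0 < ρ → 4 * Real.sqrt n ≤ ‖h‖ →
          Measurable φ →
          (∀ x, |φ x| ≤ 2 * Set.indicator (cubeC n c₀ ρ) (fun _ => (1 : ℝ)) x) →
          (∫ x, φ x) = 0 →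
          ∀ x ∈ cubeC n (c₀ + ρ • h) ρ,
            |∫ y in cubeC n c₀ ρ, Ω (x - y) * ‖x - y‖ ^ (α - (n : ℝ)) * φ y| ≤
              C * ρ ^ α * ‖h‖ ^ (α - (n : ℝ)) *
                (‖h‖⁻¹ + ρ ^ (-(n : ℝ)) *
                  ∫ y in cubeC n c₀ ρ, |Ω (x - y) - Ω (x - c₀)|) :=
  stmt_17_general hn α M hαn hM
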